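/- Let A be a noetherian commutative ring graded by an abelian group ι, let I be a homogeneous ideal of A, and let I = Q₁ ∩ ⋯ ∩ Q_r be a minimal G-primary decomposition. Then the set {(√Q₁)*, …, (√Q_r)*} equals the set of all ideals of the form I : J, where J ranges over homogeneous ideals of A such that the colon ideal I : J is G-prime. In particular, this set depends only on I and not on the chosen minimal G-primary decomposition. -/

import Mathlib

/-- A homogeneous ideal `P` of a graded ring `A` is `G`-prime if `P = 𝔭*`
(the homogeneous core) for some prime ideal `𝔭` of `A`. -/
def Ideal.IsGPrime {ι : Type*} [AddCommGroup ι] [DecidableEq ι] {A : Type*} [CommRing A]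
    (𝒜 : ι → AddSubgroup A) [GradedRing 𝒜] (P : Ideal A) : Prop :=
  ∃ 𝔭 : Ideal A, 𝔭.IsPrime ∧ P = (𝔭.homogeneousCore 𝒜).toIdeal

/-- A homogeneous ideal `Q` of a graded ring `A` is `G`-primary if `Q ≠ A` and for all
homogeneous ideals `I`, `J` with `I·J ⊆ Q` and `J ⊄ Q`, one has `I ⊆ (√Q)*`. -/
def Ideal.IsGPrimary {ι : Type*} [AddCommGroup ι] [DecidableEq ι] {A : Type*} [CommRing A]
    (𝒜 : ι → AddSubgroup A) [GradedRing 𝒜] (Q : Ideal A) : Prop :=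
  Q ≠ ⊤ ∧ ∀ I J : Ideal A, I.IsHomogeneous 𝒜 → J.IsHomogeneous 𝒜 →
    I * J ≤ Q → ¬ J ≤ Q → I ≤ (Q.radical.homogeneousCore 𝒜).toIdeal

/-- A minimal `G`-primary decomposition of a homogeneous ideal `I`: each `Q i` is a
`G`-primary homogeneous ideal, `I = ⋂ i, Q i`, the `G`-radicals `(√(Q i))*` are pairwise
distinct, and no component is redundant. -/
def IsMinimalGPrimaryDecomposition {ι : Type*} [AddCommGroup ι] [DecidableEq ι]
    {A : Type*} [CommRing A] (𝒜 : ι → AddSubgroup A) [GradedRing 𝒜]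
    {κ : Type*} [Fintype κ] (I : Ideal A) (Q : κ → Ideal A) : Prop :=
  (∀ i, (Q i).IsHomogeneous 𝒜 ∧ (Q i).IsGPrimary 𝒜) ∧
  I = ⨅ i, Q i ∧
  (∀ i j, ((Q i).radical.homogeneousCore 𝒜).toIdeal
      = ((Q j).radical.homogeneousCore 𝒜).toIdeal → i = j) ∧
  (∀ i, ¬ (⨅ j, ⨅ (_ : j ≠ i), Q j) ≤ Q i)

/-!
The `G`-radical `P = (√Q)*` of a `G`-primary ideal `Q` is `G`-prime: it satisfies primality
against homogeneous ideals, and an ideal maximal among those with homogeneous core `P` is then an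
honest prime with core `P`. If `J₀` is the intersection of the other components and `k` is least
with `J₀ P^k ⊆ Q`, then `J = J₀ P^(k-1)` gives `I : J = Q : J = P`. Conversely, if `I : J = 𝔭*`,
prime avoidance puts some `Q_i : J` inside `𝔭`; `G`-primality of `Q_i` gives `I : J ⊆ (√Q_i)*`
and `Q_i ⊆ 𝔭` gives the reverse inclusion.
-/

namespace Ideal

section CommSemiring

variable {A : Type*} [CommSemiring A]

theorem le_colon_iff_mul_le {I J K : Ideal A} : K ≤ I.colon J ↔ K * J ≤ I := by
  rw [Ideal.mul_le]
  simp only [SetLike.le_def, Submodule.mem_colon, smul_eq_mul, SetLike.mem_coe]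

theorem iInf_colon_eq_of_le_of_ne {κ : Type*} {Q : κ → Ideal A} {J : Ideal A} {i : κ}
    (hJ : ∀ j ≠ i, J ≤ Q j) : (⨅ j, Q j).colon J = (Q i).colon J := by
  rw [Submodule.iInf_colon]
  refine le_antisymm (iInf_le _ i) (le_iInf fun j => ?_)
  rcases eq_or_ne j i with rfl | hj
  · exact le_rfl
  · rw [(Submodule.colon_eq_top_iff_subset _).2 (hJ j hj)]
    exact le_top

theorem le_radical_of_pow_le {I K : Ideal A} {n : ℕ} (h : I ^ n ≤ K) : I ≤ K.radical :=
  fun _ hx => ⟨n, h (pow_mem_pow hx n)⟩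

end CommSemiring

section GradedRing

variable {ι σ A : Type*} [DecidableEq ι] [AddMonoid ι] [CommSemiring A]
  [SetLike σ A] [AddSubmonoidClass σ A] {𝒜 : ι → σ} [GradedRing 𝒜]

theorem IsHomogeneous.le_toIdeal_homogeneousCore {I J : Ideal A} (hJ : J.IsHomogeneous 𝒜)
    (h : J ≤ I) : J ≤ (I.homogeneousCore 𝒜).toIdeal :=
  hJ.toIdeal_homogeneousCore_eq_self.ge.trans (homogeneousCore'_mono 𝒜 h)

theorem IsHomogeneous.pow {I : Ideal A} (hI : I.IsHomogeneous 𝒜) (n : ℕ) :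
    (I ^ n).IsHomogeneous 𝒜 := by
  induction n with
  | zero => simpa only [pow_zero, one_eq_top] using IsHomogeneous.top 𝒜
  | succ n ih => exact pow_succ I n ▸ ih.mul hI

variable (𝒜) in
def gRadical (Q : Ideal A) : Ideal A := (Q.radical.homogeneousCore 𝒜).toIdeal

variable (𝒜) in
theorem gRadical_isHomogeneous (Q : Ideal A) : (Q.gRadical 𝒜).IsHomogeneous 𝒜 :=
  (Q.radical.homogeneousCore 𝒜).isHomogeneous

variable (𝒜) in
theorem gRadical_le_radical (Q : Ideal A) : Q.gRadical 𝒜 ≤ Q.radical :=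
  toIdeal_homogeneousCore_le _ _

theorem gRadical_ne_top {Q : Ideal A} (hQ : Q ≠ ⊤) : Q.gRadical 𝒜 ≠ ⊤ := fun h =>
  hQ <| radical_eq_top.1 <| top_le_iff.1 <| h ▸ gRadical_le_radical 𝒜 Q

end GradedRing

section Colon

variable {ι σ A : Type*} [DecidableEq ι] [AddRightCancelMonoid ι] [CommSemiring A]
  [SetLike σ A] [AddSubmonoidClass σ A] {𝒜 : ι → σ} [GradedRing 𝒜]

theorem IsHomogeneous.colon {I J : Ideal A} (hI : I.IsHomogeneous 𝒜) (hJ : J.IsHomogeneous 𝒜) :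
    (I.colon J).IsHomogeneous 𝒜 := by
  classical
  intro d a ha
  rw [Submodule.mem_colon] at ha ⊢
  intro j hj
  rw [smul_eq_mul, ← DirectSum.sum_support_decompose 𝒜 j, Finset.mul_sum]
  refine sum_mem _ fun e _ => ?_
  have h := hI (d + e) (ha _ (hJ e hj))
  rwa [smul_eq_mul,
    DirectSum.coe_decompose_mul_add_of_right_mem 𝒜 (DirectSum.decompose 𝒜 j e).2] at h

end Colon

variable {ι : Type*} [AddCommGroup ι] [DecidableEq ι] {A : Type*} [CommRing A]
  {𝒜 : ι → AddSubgroup A} [GradedRing 𝒜]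

theorem IsHomogeneous.isGPrime_of_mul_le [IsNoetherianRing A] {P : Ideal A}
    (hP : P.IsHomogeneous 𝒜) (hP_ne : P ≠ ⊤)
    (hmul : ∀ I J : Ideal A, I.IsHomogeneous 𝒜 → J.IsHomogeneous 𝒜 → I * J ≤ P → I ≤ P ∨ J ≤ P) :
    P.IsGPrime 𝒜 := by
  -- an ideal maximal among those whose homogeneous core is `P` is prime
  obtain ⟨p, ⟨hPp, hpP⟩, hmax⟩ := set_has_maximal_iff_noetherian.mpr inferInstance
    {𝔞 : Ideal A | P ≤ 𝔞 ∧ (𝔞.homogeneousCore 𝒜).toIdeal ≤ P}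
    ⟨P, le_rfl, toIdeal_homogeneousCore_le _ _⟩
  have hcore : ∀ c ∉ p, ¬ (homogeneousCore 𝒜 (p ⊔ span {c})).toIdeal ≤ P := fun c hc hle =>
    hmax _ ⟨hPp.trans le_sup_left, hle⟩ (left_lt_sup.2 (mt (span_singleton_le_iff_mem _).1 hc))
  refine ⟨p, ⟨fun hp => hP_ne ?_, fun {a b} hab => ?_⟩,
    le_antisymm (hP.le_toIdeal_homogeneousCore hPp) hpP⟩
  · subst hp
    rw [(IsHomogeneous.top 𝒜).toIdeal_homogeneousCore_eq_self] at hpP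
    exact top_le_iff.1 hpP
  by_contra! hab'
  obtain ⟨ha, hb⟩ := hab'
  have hsup_mul : (p ⊔ span {a}) * (p ⊔ span {b}) ≤ p := by
    rw [sup_mul, mul_sup, mul_sup, span_singleton_mul_span_singleton]
    exact sup_le (sup_le mul_le_left mul_le_left)
      (sup_le mul_le_right ((span_singleton_le_iff_mem _).2 hab))
  have hhom : ∀ c, (homogeneousCore 𝒜 (p ⊔ span {c})).toIdeal.IsHomogeneous 𝒜 :=
    fun c => (homogeneousCore 𝒜 _).isHomogeneous
  have hcore_mul : (homogeneousCore 𝒜 (p ⊔ span {a})).toIdeal *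
      (homogeneousCore 𝒜 (p ⊔ span {b})).toIdeal ≤ P :=
    (((hhom a).mul (hhom b)).le_toIdeal_homogeneousCore
      ((mul_mono (toIdeal_homogeneousCore_le _ _) (toIdeal_homogeneousCore_le _ _)).trans
        hsup_mul)).trans hpP
  rcases hmul _ _ (hhom a) (hhom b) hcore_mul with h | h
  exacts [hcore a ha h, hcore b hb h]

namespace IsGPrimary

variable {Q : Ideal A}

theorem colon_le_gRadical (hQ : Q.IsGPrimary 𝒜) (hQh : Q.IsHomogeneous 𝒜) {J : Ideal A}
    (hJ : J.IsHomogeneous 𝒜) (hJQ : ¬ J ≤ Q) : Q.colon J ≤ Q.gRadical 𝒜 :=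
  hQ.2 _ J (hQh.colon hJ) hJ (le_colon_iff_mul_le.1 le_rfl) hJQ

theorem mul_le_gRadical [IsNoetherianRing A] (hQ : Q.IsGPrimary 𝒜) {I J : Ideal A}
    (hI : I.IsHomogeneous 𝒜) (hJ : J.IsHomogeneous 𝒜) (h : I * J ≤ Q.gRadical 𝒜) :
    I ≤ Q.gRadical 𝒜 ∨ J ≤ Q.gRadical 𝒜 := by
  obtain ⟨n, hn⟩ := exists_pow_le_of_le_radical_of_fg_radical (h.trans (gRadical_le_radical 𝒜 Q))
    (IsNoetherian.noetherian _)
  rw [mul_pow] at hn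
  by_cases hJn : J ^ n ≤ Q
  · exact .inr (hJ.le_toIdeal_homogeneousCore (le_radical_of_pow_le hJn))
  · refine .inl (hI.le_toIdeal_homogeneousCore ?_)
    have hIn := (hQ.2 _ _ (hI.pow n) (hJ.pow n) hn hJn).trans (gRadical_le_radical 𝒜 Q)
    simpa only [radical_idem] using le_radical_of_pow_le hIn

theorem isGPrime_gRadical [IsNoetherianRing A] (hQ : Q.IsGPrimary 𝒜) :
    (Q.gRadical 𝒜).IsGPrime 𝒜 :=
  (gRadical_isHomogeneous 𝒜 Q).isGPrime_of_mul_le (gRadical_ne_top hQ.1)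
    fun _ _ hI hJ h => hQ.mul_le_gRadical hI hJ h

theorem exists_colon_eq_gRadical [IsNoetherianRing A] (hQ : Q.IsGPrimary 𝒜)
    (hQh : Q.IsHomogeneous 𝒜) {J₀ : Ideal A} (hJ₀ : J₀.IsHomogeneous 𝒜) (hJ₀Q : ¬ J₀ ≤ Q) :
    ∃ J ≤ J₀, J.IsHomogeneous 𝒜 ∧ Q.colon J = Q.gRadical 𝒜 := by
  classical
  obtain ⟨n, hn⟩ := exists_pow_le_of_le_radical_of_fg_radical (gRadical_le_radical 𝒜 Q)
    (IsNoetherian.noetherian _)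
  have hex : ∃ k, J₀ * Q.gRadical 𝒜 ^ k ≤ Q := ⟨n, mul_le_right.trans hn⟩
  obtain ⟨m, hm⟩ : ∃ m, Nat.find hex = m + 1 :=
    Nat.exists_eq_succ_of_ne_zero fun h0 => hJ₀Q (by simpa [h0] using Nat.find_spec hex)
  have hJQ : ¬ J₀ * Q.gRadical 𝒜 ^ m ≤ Q := Nat.find_min hex (by omega)
  have hJ := hJ₀.mul ((gRadical_isHomogeneous 𝒜 Q).pow m)
  refine ⟨_, mul_le_left, hJ,
    le_antisymm (hQ.colon_le_gRadical hQh hJ hJQ) (le_colon_iff_mul_le.2 ?_)⟩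
  calc Q.gRadical 𝒜 * (J₀ * Q.gRadical 𝒜 ^ m) = J₀ * Q.gRadical 𝒜 ^ (m + 1) := by ring
    _ ≤ Q := hm ▸ Nat.find_spec hex

end IsGPrimary

theorem exists_colon_eq_gRadical_of_isGPrime {κ : Type*} [Finite κ] {Q : κ → Ideal A}
    (hQ : ∀ i, (Q i).IsHomogeneous 𝒜 ∧ (Q i).IsGPrimary 𝒜) {J : Ideal A}
    (hJ : J.IsHomogeneous 𝒜) (hP : ((⨅ i, Q i).colon J).IsGPrime 𝒜) :
    ∃ i, (⨅ i, Q i).colon J = (Q i).gRadical 𝒜 := by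
  obtain ⟨p, hp, hcolon⟩ := hP
  have := Fintype.ofFinite κ
  obtain ⟨i, -, hi⟩ : ∃ i ∈ Finset.univ, (Q i).colon J ≤ p := hp.inf_le'.1 <| by
    rw [Finset.inf_univ_eq_iInf, ← Submodule.iInf_colon, hcolon]
    exact toIdeal_homogeneousCore_le _ _
  have hJQ : ¬ J ≤ Q i := fun h =>
    hp.ne_top (top_le_iff.1 ((Submodule.colon_eq_top_iff_subset _).2 h ▸ hi))
  refine ⟨i, le_antisymm ((Submodule.colon_mono (iInf_le _ i) subset_rfl).trans
    ((hQ i).2.colon_le_gRadical (hQ i).1 hJ hJQ)) ?_⟩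
  rw [hcolon]
  exact (gRadical_isHomogeneous 𝒜 _).le_toIdeal_homogeneousCore
    ((gRadical_le_radical 𝒜 _).trans (hp.radical_le_iff.2 (le_colon.trans hi)))

end Ideal

theorem gAssociated_gPrimes_eq_general {ι : Type*} [AddCommGroup ι] [DecidableEq ι]
    {A : Type*} [CommRing A] [IsNoetherianRing A]
    (𝒜 : ι → AddSubgroup A) [GradedRing 𝒜] {r : ℕ} (I : Ideal A)
    (Q : Fin r → Ideal A) (hQ : IsMinimalGPrimaryDecomposition 𝒜 I Q) :
    {P : Ideal A | ∃ i, P = ((Q i).radical.homogeneousCore 𝒜).toIdeal}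
      = {P : Ideal A | ∃ J : Ideal A, J.IsHomogeneous 𝒜 ∧
          (Submodule.colon I J).IsGPrime 𝒜 ∧ P = Submodule.colon I J} := by
  obtain ⟨hQ, rfl, -, hmin⟩ := hQ
  ext P
  constructor
  · rintro ⟨i, rfl⟩
    obtain ⟨J, hJJ₀, hJ, hcolon⟩ := (hQ i).2.exists_colon_eq_gRadical (hQ i).1
      (Ideal.IsHomogeneous.iInf₂ fun j _ => (hQ j).1) (hmin i)
    have hJQ : ∀ j ≠ i, J ≤ Q j := le_iInf₂_iff.1 hJJ₀
    have hcolon' : (⨅ j, Q j).colon J = (Q i).gRadical 𝒜 := by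
      rw [Ideal.iInf_colon_eq_of_le_of_ne hJQ, hcolon]
    exact ⟨J, hJ, hcolon' ▸ (hQ i).2.isGPrime_gRadical, hcolon'.symm⟩
  · rintro ⟨J, hJ, hP, rfl⟩
    exact Ideal.exists_colon_eq_gRadical_of_isGPrime hQ hJ hP

/-- Let `I = Q₁ ∩ ⋯ ∩ Q_r` be a minimal `G`-primary decomposition of a homogeneous ideal of a
noetherian graded ring.  Then `{(√Q₁)*, …, (√Q_r)*}` equals the set of all ideals of the form
`I : J` with `J` homogeneous and `I : J` `G`-prime.  In particular this set is independent of
the chosen minimal `G`-primary decomposition. -/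
theorem gAssociated_gPrimes_eq {ι : Type*} [AddCommGroup ι] [DecidableEq ι]
    {A : Type*} [CommRing A] [IsNoetherianRing A]
    (𝒜 : ι → AddSubgroup A) [GradedRing 𝒜] {r : ℕ} (I : Ideal A) (hI : I.IsHomogeneous 𝒜)
    (Q : Fin r → Ideal A) (hQ : IsMinimalGPrimaryDecomposition 𝒜 I Q) :
    {P : Ideal A | ∃ i, P = ((Q i).radical.homogeneousCore 𝒜).toIdeal}
      = {P : Ideal A | ∃ J : Ideal A, J.IsHomogeneous 𝒜 ∧
          (Submodule.colon I J).IsGPrime 𝒜 ∧ P = Submodule.colon I J} :=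
  gAssociated_gPrimes_eq_general 𝒜 I Q hQ
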